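/- If B ⊆ ℂ^{K×K} has Lebesgue measure zero, then the preimage adj⁻¹(B) = {A ∈ ℂ^{K×K} : adj(A) ∈ B} also has Lebesgue measure zero, for K ≥ 2. -/

import Mathlib

/-!
Singular matrices form a null set, being covered by finitely many differentiable images of
hyperplanes. On invertible matrices, `A = det A • (adj A)⁻¹` and `det A` is a `(K - 1)`-th root of
`det (adj A)`, so `A` is recovered from `adj A` by one of countably many holomorphic branches of
that root. Hence `adj⁻¹ B` minus the singular matrices lies in countably many differentiable
images of `B`, and differentiable maps send null sets to null sets.
-/

open MeasureTheory Matrix Set Complex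

section LeftInverses

variable {E : Type*} [NormedAddCommGroup E] [NormedSpace ℝ E] [FiniteDimensional ℝ E]
  [MeasurableSpace E] [BorelSpace E] (μ : Measure E) [μ.IsAddHaarMeasure]

theorem addHaar_inter_preimage_eq_zero_of_leftInverses {ι : Type*} {I : Set ι}
    (hI : I.Countable) {f : E → E} {g : ι → E → E} {t : ι → Set E} {s B : Set E}
    (hg : ∀ i ∈ I, DifferentiableOn ℝ (g i) (t i))
    (hcover : ∀ x ∈ s, ∃ i ∈ I, f x ∈ t i ∧ g i (f x) = x) (hB : μ B = 0) :
    μ (s ∩ f ⁻¹' B) = 0 := by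
  have hsub : s ∩ f ⁻¹' B ⊆ ⋃ i ∈ I, g i '' (t i ∩ B) := by
    rintro x ⟨hxs, hxB⟩
    obtain ⟨i, hi, hxt, hgx⟩ := hcover x hxs
    exact mem_biUnion hi ⟨f x, ⟨hxt, hxB⟩, hgx⟩
  refine measure_mono_null hsub ((measure_biUnion_null_iff hI).2 fun i hi => ?_)
  exact addHaar_image_eq_zero_of_differentiableOn_of_addHaar_eq_zero μ
    ((hg i hi).mono inter_subset_left) (measure_mono_null inter_subset_right hB)

end LeftInverses

theorem Matrix.updateCol_mulVec_of_apply_eq_zero {m n R : Type*} [Fintype n] [DecidableEq n]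
    [CommRing R] (A : Matrix m n R) {j : n} (c : m → R) {w : n → R} (hw : w j = 0) :
    A.updateCol j c *ᵥ w = A *ᵥ w := by
  ext r
  refine Finset.sum_congr rfl fun i _ => ?_
  by_cases hi : i = j
  · subst hi
    simp [hw]
  · simp [updateCol_ne hi]

/-- The `j`-th column of `M` holds the coefficients expressing the `j`-th column of `A` through
the other columns. -/
theorem Matrix.exists_updateCol_mulVec_eq_of_det_eq_zero {n F : Type*} [Fintype n]
    [DecidableEq n] [Field F] {A : Matrix n n F} (hA : A.det = 0) :
    ∃ j, ∃ M : Matrix n n F, M j j = 0 ∧ M.updateCol j (M *ᵥ fun i => M i j) = A := by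
  obtain ⟨v, hv0, hv⟩ := exists_mulVec_eq_zero_iff.2 hA
  obtain ⟨j, hvj⟩ := Function.ne_iff.1 hv0
  set w : n → F := Pi.single j 1 - (v j)⁻¹ • v
  have hwj : w j = 0 := by simp [w, inv_mul_cancel₀ hvj]
  refine ⟨j, A.updateCol j w, by simpa using hwj, ?_⟩
  have hAw : A *ᵥ w = fun i => A i j := by
    ext i
    simp [w, mulVec_sub, mulVec_smul, hv, mulVec_single]
  simp only [updateCol_self, updateCol_mulVec_of_apply_eq_zero _ _ hwj, hAw]
  rw [updateCol_idem, updateCol_eq_self]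

section Differentiability

variable {n 𝕜 X : Type*} [Fintype n] [DecidableEq n] [NontriviallyNormedField 𝕜]
  [NormedAddCommGroup X] [NormedSpace 𝕜 X] {f : X → Matrix n n 𝕜}

theorem Differentiable.matrix_det (hf : ∀ i j, Differentiable 𝕜 fun x => f x i j) :
    Differentiable 𝕜 fun x => (f x).det := by
  simp only [det_apply']
  fun_prop

theorem Differentiable.matrix_adjugate_apply (hf : ∀ i j, Differentiable 𝕜 fun x => f x i j)
    (i j : n) : Differentiable 𝕜 fun x => (f x).adjugate i j := by
  simp only [adjugate_apply]
  refine Differentiable.matrix_det fun k l => ?_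
  by_cases hk : k = j
  · simp [hk]
  · simpa [updateRow_ne hk] using hf k l

end Differentiability

theorem differentiable_of_apply {n : Type*} [Fintype n] (i j : n) :
    Differentiable ℂ fun M : n → n → ℂ => of M i j := by
  simp only [of_apply]
  fun_prop

section ComplexMatrices

variable {n : Type*} [Fintype n] [DecidableEq n]

theorem differentiable_updateCol_mulVec_apply (j : n) :
    Differentiable ℂ fun M : n → n → ℂ =>
      ((of M).updateCol j (of M *ᵥ fun i => M i j) : n → n → ℂ) := by
  refine differentiable_pi.2 fun r => differentiable_pi.2 fun c => ?_
  by_cases hc : c = j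
  · simp only [hc, updateCol_self, mulVec, dotProduct, of_apply]
    fun_prop
  · simp only [updateCol_ne hc, of_apply]
    fun_prop

theorem addHaar_setOf_apply_apply_eq_zero (μ : Measure (n → n → ℂ)) [μ.IsAddHaarMeasure]
    (j : n) : μ {M | M j j = 0} = 0 := by
  let L : (n → n → ℂ) →ₗ[ℝ] ℂ :=
    (LinearMap.proj j : (n → ℂ) →ₗ[ℝ] ℂ).comp (LinearMap.proj j)
  refine Measure.addHaar_submodule μ (LinearMap.ker L) fun htop => ?_
  have : (Pi.single j (Pi.single j 1) : n → n → ℂ) ∈ LinearMap.ker L :=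
    htop ▸ Submodule.mem_top
  simp [L] at this

theorem addHaar_setOf_det_eq_zero (μ : Measure (n → n → ℂ)) [μ.IsAddHaarMeasure] :
    μ {A | (of A).det = 0} = 0 := by
  have hsub : {A | (of A).det = 0} ⊆ ⋃ j, (fun M : n → n → ℂ =>
      ((of M).updateCol j (of M *ᵥ fun i => M i j) : n → n → ℂ)) '' {M | M j j = 0} := by
    intro A hA
    obtain ⟨j, M, hM, rfl⟩ := exists_updateCol_mulVec_eq_of_det_eq_zero hA
    exact mem_iUnion.2 ⟨j, M, hM, rfl⟩
  refine measure_mono_null hsub (measure_iUnion_null fun j => ?_)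
  exact addHaar_image_eq_zero_of_differentiableOn_of_addHaar_eq_zero μ
    ((differentiable_updateCol_mulVec_apply j).restrictScalars ℝ).differentiableOn
    (addHaar_setOf_apply_apply_eq_zero μ j)

/-- For `q * det M` in the slit plane, `(q * det M) ^ (1 / (card n - 1))` is a holomorphic root;
the root of unity `u` corrects the branch. -/
noncomputable def adjugateInverseBranch (q u : ℂ) (M : n → n → ℂ) : n → n → ℂ :=
  (u * (q * (of M).det) ^ ((Fintype.card n - 1 : ℕ) : ℂ)⁻¹) • (of M)⁻¹

theorem differentiableOn_adjugateInverseBranch (q u : ℂ) :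
    DifferentiableOn ℂ (adjugateInverseBranch (n := n) q u)
      {M | q * (of M).det ∈ slitPlane} := by
  intro M hM
  have hdet : Differentiable ℂ fun M : n → n → ℂ => (of M).det :=
    Differentiable.matrix_det differentiable_of_apply
  have hdet0 : (of M).det ≠ 0 := right_ne_zero_of_mul (slitPlane_ne_zero hM)
  refine DifferentiableAt.differentiableWithinAt ?_
  refine differentiableAt_pi.2 fun i => differentiableAt_pi.2 fun j => ?_
  simp only [adjugateInverseBranch, Matrix.inv_def, Ring.inverse_eq_inv', Matrix.smul_apply,
    smul_eq_mul]
  have hroot := ((hdet.const_mul q).differentiableAt (x := M)).cpow_const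
    (c := ((Fintype.card n - 1 : ℕ) : ℂ)⁻¹) hM
  have hadj := Differentiable.matrix_adjugate_apply differentiable_of_apply i j
  exact (hroot.const_mul u).mul (((hdet M).inv hdet0).mul (hadj M))

theorem exists_adjugateInverseBranch_adjugate_eq (hn : 2 ≤ Fintype.card n)
    {A : n → n → ℂ} (hA : (of A).det ≠ 0) :
    ∃ q u : ℂ, q ^ 2 = 1 ∧ u ^ (2 * (Fintype.card n - 1)) = 1 ∧
      q * (of A).adjugate.det ∈ slitPlane ∧ adjugateInverseBranch q u (of A).adjugate = A := by
  set p := Fintype.card n - 1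
  have hp : p ≠ 0 := by omega
  set d := (of A).det
  have hdetadj : (of A).adjugate.det = d ^ p := det_adjugate _
  obtain ⟨q, hq, hslit⟩ : ∃ q : ℂ, q ^ 2 = 1 ∧ q * d ^ p ∈ slitPlane := by
    rcases mem_slitPlane_or_neg_mem_slitPlane (pow_ne_zero p hA) with h | h
    · exact ⟨1, one_pow 2, by rwa [one_mul]⟩
    · exact ⟨-1, by norm_num, by rwa [neg_one_mul]⟩
  set w := (q * d ^ p) ^ (p : ℂ)⁻¹
  have hwp : w ^ p = q * d ^ p := cpow_nat_inv_pow _ hp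
  have hw : w ≠ 0 := fun h => slitPlane_ne_zero hslit (by rw [← hwp, h, zero_pow hp])
  refine ⟨q, d / w, hq, ?_, by rwa [hdetadj], ?_⟩
  · have hq0 : q ≠ 0 := by
      rintro rfl
      norm_num at hq
    rw [pow_mul', div_pow, hwp]
    field_simp
    exact hq.symm
  · change (d / w * (q * (of A).adjugate.det) ^ (p : ℂ)⁻¹) • (of A).adjugate⁻¹ = A
    rw [hdetadj, div_mul_cancel₀ _ hw, inv_adjugate _ (isUnit_iff_ne_zero.2 hA)]
    funext i j
    simp only [Units.smul_def, Matrix.smul_apply, smul_eq_mul, of_apply]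
    rw [← mul_assoc, IsUnit.mul_val_inv, one_mul]

end ComplexMatrices

theorem Complex.countable_setOf_pow_eq_one {m : ℕ} (hm : 0 < m) :
    {z : ℂ | z ^ m = 1}.Countable := by
  simpa [hm] using (Polynomial.nthRootsFinset m (1 : ℂ)).countable_toSet

theorem adjugate_preimage_null (K : ℕ) (hK : 2 ≤ K)
    (B : Set (Matrix (Fin K) (Fin K) ℂ))
    (hB : volume {A : Fin K → Fin K → ℂ | Matrix.of A ∈ B} = 0) :
    volume {A : Fin K → Fin K → ℂ | Matrix.adjugate (Matrix.of A) ∈ B} = 0 := by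
  have : (volume : Measure (Fin K → Fin K → ℂ)).IsAddHaarMeasure :=
    Measure.pi.isAddHaarMeasure _
  have hcard : 2 ≤ Fintype.card (Fin K) := by rwa [Fintype.card_fin]
  let I : Set (ℂ × ℂ) := {q | q ^ 2 = 1} ×ˢ {u | u ^ (2 * (Fintype.card (Fin K) - 1)) = 1}
  have hI : I.Countable :=
    (countable_setOf_pow_eq_one two_pos).prod (countable_setOf_pow_eq_one (by omega))
  have hsplit : {A : Fin K → Fin K → ℂ | (of A).adjugate ∈ B} ⊆ {A | (of A).det = 0} ∪
      ({A | (of A).det ≠ 0} ∩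
        (fun A => ((of A).adjugate : Fin K → Fin K → ℂ)) ⁻¹' {M | of M ∈ B}) :=
    fun A hA => (em ((of A).det = 0)).imp id fun h => ⟨h, hA⟩
  refine measure_mono_null hsplit
    (measure_union_null (addHaar_setOf_det_eq_zero (n := Fin K) volume) ?_)
  refine addHaar_inter_preimage_eq_zero_of_leftInverses volume hI
    (g := fun i => adjugateInverseBranch i.1 i.2)
    (t := fun i => {M | i.1 * (of M).det ∈ slitPlane})
    (fun i _ => (differentiableOn_adjugateInverseBranch i.1 i.2).restrictScalars ℝ)
    (fun A hA => ?_) hB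
  obtain ⟨q, u, hq, hu, hslit, heq⟩ := exists_adjugateInverseBranch_adjugate_eq hcard hA
  exact ⟨(q, u), ⟨hq, hu⟩, hslit, heq⟩
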